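/- Suppose all agents of the same type have the same endowment (μ^E(a) = μ^E(b) whenever a, b have the same type). Then the problem is rationalizable if and only if μ(a) = μ(b) for all same-type agents a, b; i.e., if and only if all agents of a type receive the same house type. -/

import Mathlib

/-!
Necessity: balance yields a permutation `π` of the agents with `μE ∘ π = μ`. If two agents
`a ≠ b` of one type (hence with one endowment) receive different houses, say `a` prefers `μ b`,
follow `π` from `b` until it first returns to `{a, b}`. The agents visited before that receive,
as a multiset, exactly the houses they own, because the endpoint owns the same house as `b`.
Swapping `b` for `a` in this set gives a blocking coalition: `a` takes `μ b`, everyone else keeps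
their house. Sufficiency: put each type's common house on top of its preference.
-/

def arcBig {A H : Type*} (μE μ : A → H) (a b : A) : Prop := μ a = μE b

/-- Two agents lie in the same strongly connected component of G^big. -/
def sameSCC {A H : Type*} (μE μ : A → H) (a b : A) : Prop :=
  Relation.ReflTransGen (arcBig μE μ) a b ∧ Relation.ReflTransGen (arcBig μE μ) b a

/-- For each house type, the number of agents allocated it equals the number endowed with it. -/
def BalancedAlloc {A H : Type*} (μE μ : A → H) : Prop :=
  ∀ h : H, Nat.card {a : A // μ a = h} = Nat.card {a : A // μE a = h}

/-- A directed cycle: a nonempty list of distinct vertices with consecutive arcs,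
and an arc from the last vertex back to the first. A single vertex with a
self-loop is a cycle of length 1. -/
def IsCycle {V : Type*} (R : V → V → Prop) (l : List V) : Prop :=
  l ≠ [] ∧ l.Nodup ∧ l.Chain' R ∧ ∀ h : l ≠ [], R (l.getLast h) (l.head h)

/-- A blocking coalition: a nonempty coalition `C` and a reallocation `μ'` of its
own endowments (as multisets) making every member weakly better off and at least
one member strictly better off, w.r.t. the strict type-preference profile `P`. -/
def Blocking {A H T : Type*} (tp : A → T) (μE μ : A → H)
    (P : T → LinearOrder H) : Prop :=
  ∃ (C : Finset A) (μ' : A → H),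
    C.Nonempty ∧
    C.val.map μ' = C.val.map μE ∧
    (∀ a ∈ C, (P (tp a)).le (μ a) (μ' a)) ∧
    (∃ a ∈ C, (P (tp a)).lt (μ a) (μ' a))

/-- The allocation `μ` is rationalizable: some strict type-preference profile places
it in the strong core (no blocking coalition). -/
def Rationalizable {A H T : Type*} (tp : A → T) (μE μ : A → H) : Prop :=
  ∃ P : T → LinearOrder H, ¬ Blocking tp μE μ P

theorem Multiset.map_range_succ_eq_of_eq {M : Type*} (u : ℕ → M) {k : ℕ} (hk : u k = u 0) :
    (Multiset.range k).map (fun j => u (j + 1)) = (Multiset.range k).map u := by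
  have h := congrArg (Multiset.map u) (Multiset.range_add 1 k)
  rw [add_comm, Multiset.range_succ, Multiset.map_cons, Multiset.map_add, Multiset.map_map] at h
  simpa [hk, add_comm] using h.symm

theorem Equiv.Perm.exists_finset_map_comp_eq {A M : Type*} [Finite A] (π : Equiv.Perm A)
    (g : A → M) {a b : A} (hab : a ≠ b) (hg : g a = g b) :
    ∃ O : Finset A, b ∈ O ∧ a ∉ O ∧ O.val.map (g ∘ π) = O.val.map g := by
  classical
  have hex : ∃ k, 0 < k ∧ (π ^ k) b ∈ ({a, b} : Set A) :=
    ⟨orderOf π, orderOf_pos π, by simp [pow_orderOf_eq_one]⟩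
  set k := Nat.find hex
  obtain ⟨hk_pos, hk_mem⟩ : 0 < k ∧ (π ^ k) b ∈ ({a, b} : Set A) := Nat.find_spec hex
  have hk_min : ∀ j, 0 < j → j < k → (π ^ j) b ≠ a ∧ (π ^ j) b ≠ b := fun j hj hjk => by
    simpa [not_or] using fun hmem => Nat.find_min hex hjk ⟨hj, hmem⟩
  have hpow_ne : ∀ i j, i < j → j < k → (π ^ i) b ≠ (π ^ j) b := fun i j hij hjk h => by
    refine (hk_min (j - i) (by omega) (by omega)).2 ((π ^ i).injective ?_)
    rw [← Equiv.Perm.mul_apply, ← pow_add, Nat.add_sub_cancel' hij.le, h]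
  have hinj : Set.InjOn (fun j => (π ^ j) b) (Finset.range k) := fun i hi j hj h => by
    simp only [Finset.coe_range, Set.mem_Iio] at hi hj
    rcases lt_trichotomy i j with hij | hij | hij
    exacts [absurd h (hpow_ne i j hij hj), hij, absurd h.symm (hpow_ne j i hij hi)]
  refine ⟨(Finset.range k).image (fun j => (π ^ j) b), ?_, ?_, ?_⟩
  · exact Finset.mem_image.2 ⟨0, Finset.mem_range.2 hk_pos, rfl⟩
  · intro hmem
    obtain ⟨j, hj, hja⟩ := Finset.mem_image.1 hmem
    rcases Nat.eq_zero_or_pos j with rfl | hj_pos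
    · exact hab hja.symm
    · exact (hk_min j hj_pos (Finset.mem_range.1 hj)).1 hja
  · have hgk : g ((π ^ k) b) = g ((π ^ 0) b) := by
      obtain h | h : (π ^ k) b = a ∨ (π ^ k) b = b := hk_mem
      · rw [h, hg, pow_zero, Equiv.Perm.one_apply]
      · rw [h, pow_zero, Equiv.Perm.one_apply]
    rw [Finset.image_val_of_injOn hinj, Finset.range_val, Multiset.map_map, Multiset.map_map]
    simpa only [Function.comp_def, ← Equiv.Perm.mul_apply, ← pow_succ'] using
      Multiset.map_range_succ_eq_of_eq (fun j => g ((π ^ j) b)) hgk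

theorem BalancedAlloc.exists_perm {A H : Type*} [Finite A] {μE μ : A → H}
    (hbal : BalancedAlloc μE μ) : ∃ π : Equiv.Perm A, ∀ x, μE (π x) = μ x :=
  ⟨Equiv.ofFiberEquiv fun h => (Finite.card_eq.1 (hbal h)).some,
    Equiv.ofFiberEquiv_map _⟩

theorem blocking_of_lt_of_balanced_finset {A H T : Type*} {tp : A → T} {μE μ : A → H}
    {P : T → LinearOrder H} {a b : A} {O : Finset A} (hbO : b ∈ O) (haO : a ∉ O)
    (hO : O.val.map μ = O.val.map μE) (he : μE a = μE b)
    (hlt : (P (tp a)).lt (μ a) (μ b)) : Blocking tp μE μ P := by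
  classical
  have haE : a ∉ O.erase b := fun h => haO (Finset.mem_of_mem_erase h)
  have hO' : μ b ::ₘ (O.erase b).val.map μ = μE b ::ₘ (O.erase b).val.map μE := by
    simpa only [← Multiset.map_cons, Finset.erase_val, Multiset.cons_erase hbO] using hO
  refine ⟨insert a (O.erase b), Function.update μ a (μ b), Finset.insert_nonempty _ _,
    ?_, ?_, a, Finset.mem_insert_self _ _, by simpa using hlt⟩
  · rw [Finset.insert_val_of_notMem haE, Multiset.map_cons, Multiset.map_cons,
      Function.update_self, he, Multiset.map_congr rfl fun x hx =>
        Function.update_of_ne (ne_of_mem_of_not_mem hx haE) _ _, hO']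
  · intro x hx
    rcases Finset.mem_insert.1 hx with rfl | hx
    · let := P (tp x)
      simpa using hlt.le
    · rw [Function.update_of_ne (ne_of_mem_of_not_mem hx haE)]
      exact (P (tp x)).le_refl _

theorem not_lt_of_not_blocking {A H T : Type*} [Finite A] {tp : A → T} {μE μ : A → H}
    {P : T → LinearOrder H} (hP : ¬ Blocking tp μE μ P) (hbal : BalancedAlloc μE μ)
    {a b : A} (he : μE a = μE b) : ¬ (P (tp a)).lt (μ a) (μ b) := fun hlt => by
  have hab : a ≠ b := by
    rintro rfl
    let := P (tp a)
    exact lt_irrefl _ hlt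
  obtain ⟨π, hπ⟩ := hbal.exists_perm
  obtain ⟨O, hbO, haO, hO⟩ := π.exists_finset_map_comp_eq μE hab he
  refine hP (blocking_of_lt_of_balanced_finset hbO haO ?_ he hlt)
  simpa only [Function.comp_def, hπ] using hO

theorem exists_linearOrder_forall_le_of_subsingleton {H : Type*} {s : Set H}
    (hs : s.Subsingleton) : ∃ o : LinearOrder H, ∀ x, ∀ y ∈ s, o.le x y := by
  classical
  let : LinearOrder H := WellOrderingRel.isWellOrder.linearOrder
  let f : H → WithTop H := fun x => if x ∈ s then ⊤ else x
  have hf : Function.Injective f := fun x y hxy => by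
    by_cases hx : x ∈ s <;> by_cases hy : y ∈ s
    · exact hs hx hy
    all_goals simp_all [f]
  exact ⟨LinearOrder.lift' f hf, fun x y hy => by
    show f x ≤ f y
    simp [f, hy]⟩

theorem not_blocking_of_forall_le {A H T : Type*} {tp : A → T} {μE μ : A → H}
    {P : T → LinearOrder H} (htop : ∀ a x, (P (tp a)).le x (μ a)) :
    ¬ Blocking tp μE μ P := by
  rintro ⟨-, μ', -, -, -, a, -, hlt⟩
  let := P (tp a)
  exact (lt_of_lt_of_le hlt (htop a (μ' a))).false

theorem stmt7_general {A H T : Type*} [Fintype A] (tp : A → T)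
    (μE μ : A → H) (hbal : BalancedAlloc μE μ)
    (hend : ∀ a b : A, tp a = tp b → μE a = μE b) :
    Rationalizable tp μE μ ↔ ∀ a b : A, tp a = tp b → μ a = μ b := by
  constructor
  · rintro ⟨P, hP⟩ a b hab
    have hba := not_lt_of_not_blocking hP hbal (hend b a hab.symm)
    have hab' := not_lt_of_not_blocking hP hbal (hend a b hab)
    rw [hab] at hab'
    let := P (tp b)
    exact le_antisymm (not_lt.1 hba) (not_lt.1 hab')
  · intro hsame
    choose P hP using fun t => exists_linearOrder_forall_le_of_subsingleton
      (s := μ '' {a | tp a = t}) (by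
        rintro _ ⟨a, ha, rfl⟩ _ ⟨b, hb, rfl⟩
        exact hsame a b (ha.trans hb.symm))
    exact ⟨P, not_blocking_of_forall_le fun a x => hP (tp a) x (μ a) ⟨a, rfl, rfl⟩⟩

/-- if all agents of the same type share the same endowment, then the
problem is rationalizable iff all same-type agents receive the same house type. -/
theorem stmt7 {A H T : Type*} [Fintype A] [Fintype H] (tp : A → T)
    (μE μ : A → H) (hbal : BalancedAlloc μE μ)
    (hend : ∀ a b : A, tp a = tp b → μE a = μE b) :
    Rationalizable tp μE μ ↔ ∀ a b : A, tp a = tp b → μ a = μ b :=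
  stmt7_general tp μE μ hbal hend
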